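/- If M ∈ Sp_{2n}(ℂ) is such that M M* = [[I, B],[C, I]] in block form with C having zeros on and above the diagonal, then M M* = I, i.e., M is unitary. -/

import Mathlib

open Matrix

/-- Index type for `2n × 2n` block matrices. -/
abbrev Idx (n : ℕ) := Fin n ⊕ Fin n

/-- The standard symplectic form matrix `J = [[0, I], [-I, 0]]`. -/
def Jmat (R : Type*) [CommRing R] (n : ℕ) : Matrix (Idx n) (Idx n) R :=
  Matrix.fromBlocks 0 1 (-1) 0

/-- A `2n × 2n` matrix is symplectic if `Mᵀ J M = J`. -/
def IsSymplectic {R : Type*} [CommRing R] {n : ℕ} (M : Matrix (Idx n) (Idx n) R) : Prop :=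
  Mᵀ * Jmat R n * M = Jmat R n

/-- The symmetric `n × n` matrix with `a` in entries `(i,j)` and `(j,i)` and zeros elsewhere. -/
def Smat {R : Type*} [CommRing R] {n : ℕ} (i j : Fin n) (a : R) : Matrix (Fin n) (Fin n) R :=
  Matrix.of fun k l => if (k = i ∧ l = j) ∨ (k = j ∧ l = i) then a else 0

/-- The elementary symplectic matrix `E_{ij}(a) = [[I, S],[0, I]]`. -/
def Emat {R : Type*} [CommRing R] {n : ℕ} (i j : Fin n) (a : R) : Matrix (Idx n) (Idx n) R :=
  Matrix.fromBlocks 1 (Smat i j a) 0 1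

/-- The elementary symplectic matrix `F_{ij}(a) = [[I, 0],[S, I]]`. -/
def Fmat {R : Type*} [CommRing R] {n : ℕ} (i j : Fin n) (a : R) : Matrix (Idx n) (Idx n) R :=
  Matrix.fromBlocks 1 0 (Smat i j a) 1

/-- The matrix `K_{ij}(a) = [[I + a e_{ij}, 0],[0, I - a e_{ji}]]` for `i ≠ j`. -/
def Kmat {R : Type*} [CommRing R] {n : ℕ} (i j : Fin n) (a : R) :
    Matrix (Idx n) (Idx n) R :=
  Matrix.fromBlocks (1 + Matrix.single i j a) 0 0 (1 - Matrix.single j i a)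

/-- An elementary symplectic matrix: `[[I,B],[0,I]]` or `[[I,0],[C,I]]` with symmetric block. -/
def IsElemSymp {R : Type*} [CommRing R] {n : ℕ} (M : Matrix (Idx n) (Idx n) R) : Prop :=
  ∃ B : Matrix (Fin n) (Fin n) R, Bᵀ = B ∧
    (M = Matrix.fromBlocks 1 B 0 1 ∨ M = Matrix.fromBlocks 1 0 B 1)

/-
M M* is Hermitian and symplectic. The upper-left block condition of a symplectic matrix
`[[I, B], [C, I]]` says that `C` is symmetric, so a `C` vanishing on and above the diagonal
is zero. Hermitian symmetry then gives `B = C* = 0`.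
-/

theorem Jmat_eq_neg_J (R : Type*) [CommRing R] (n : ℕ) : Jmat R n = -J (Fin n) R := by
  simp [Jmat, J, fromBlocks_neg]

theorem isSymplectic_iff_mem_symplecticGroup {R : Type*} [CommRing R] {n : ℕ}
    {M : Matrix (Idx n) (Idx n) R} : IsSymplectic M ↔ M ∈ symplecticGroup (Fin n) R := by
  rw [SymplecticGroup.mem_iff', IsSymplectic, Jmat_eq_neg_J, Matrix.mul_neg, Matrix.neg_mul,
    neg_inj]

theorem Matrix.conjTranspose_mem_symplecticGroup {l R : Type*} [Fintype l] [DecidableEq l]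
    [CommRing R] [StarRing R] {A : Matrix (l ⊕ l) (l ⊕ l) R}
    (hA : A ∈ symplecticGroup l R) : Aᴴ ∈ symplecticGroup l R :=
  SymplecticGroup.transpose_mem (SymplecticGroup.map_mem hA (starRingEnd R))

theorem Matrix.mul_conjTranspose_mem_symplecticGroup {l R : Type*} [Fintype l] [DecidableEq l]
    [CommRing R] [StarRing R] {A : Matrix (l ⊕ l) (l ⊕ l) R}
    (hA : A ∈ symplecticGroup l R) : A * Aᴴ ∈ symplecticGroup l R :=
  mul_mem hA (conjTranspose_mem_symplecticGroup hA)

theorem Matrix.transpose_eq_of_fromBlocks_one_mem_symplecticGroup {l R : Type*} [Fintype l]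
    [DecidableEq l] [CommRing R] {B C : Matrix l l R}
    (h : fromBlocks 1 B C 1 ∈ symplecticGroup l R) : Cᵀ = C := by
  simpa using (SymplecticGroup.fromBlocks_mem_iff.1 h).1.symm

theorem Matrix.eq_zero_of_transpose_eq_of_forall_le {ι α : Type*} [LinearOrder ι] [Zero α]
    {C : Matrix ι ι α} (hsymm : Cᵀ = C) (hC : ∀ i j, i ≤ j → C i j = 0) : C = 0 := by
  ext i j
  rcases le_total i j with hij | hji
  · exact hC i j hij
  · rw [← hsymm]
    exact hC j i hji

/-- If `M` is symplectic and `M M* = [[I,B],[C,I]]` with `C` vanishing on and above the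
diagonal, then `M M* = I`, i.e. `M` is unitary. -/
theorem stmt13 {n : ℕ} (M : Matrix (Idx n) (Idx n) ℂ) (hM : IsSymplectic M)
    (B C : Matrix (Fin n) (Fin n) ℂ)
    (hMM : M * Mᴴ = Matrix.fromBlocks 1 B C 1)
    (hC : ∀ i j : Fin n, i ≤ j → C i j = 0) :
    M * Mᴴ = 1 := by
  have hsymp : fromBlocks 1 B C 1 ∈ symplecticGroup (Fin n) ℂ :=
    hMM ▸ mul_conjTranspose_mem_symplecticGroup (isSymplectic_iff_mem_symplecticGroup.1 hM)
  have hC0 : C = 0 :=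
    eq_zero_of_transpose_eq_of_forall_le
      (transpose_eq_of_fromBlocks_one_mem_symplecticGroup hsymp) hC
  have hherm : (fromBlocks 1 B C 1).IsHermitian := hMM ▸ isHermitian_mul_conjTranspose_self M
  have hB0 : B = 0 := by
    rw [← (isHermitian_fromBlocks_iff.1 hherm).2.2.1, hC0, conjTranspose_zero]
  rw [hMM, hB0, hC0, fromBlocks_one]
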